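/- arXiv:2201.13228 — 4 statements merged into one kernel-verified Lean document; each statement's English description precedes it below -/
import Mathlib

section
/- Let f = (f₁,…,f_d) be a tuple of homogeneous polynomials of degree ℓ ≥ 1 in d variables satisfying Σᵢ zᵢfᵢ = 0. Then for every w ∈ ℂ^d and every index i, ⟨f, ⟨z,w⟩^{ℓ-1} w̄ zᵀ eᵢ⟩_{F_ℓ} = -(ℓ-1)! · fᵢ(w), where the inner product is the Fischer-Fock inner product on ℂ^d ⊗ P_ℓ, ⟨z,w⟩ = Σⱼ zⱼw̄ⱼ, and w̄ zᵀ eᵢ denotes the vector-valued polynomial z ↦ zᵢ·w̄. -/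
/-!
Multiplication by `zᵢ` is adjoint to `∂ᵢ` for the Fischer–Fock product, so by induction on `n`
and Euler's identity `∑ₖ zₖ ∂ₖ p = n p`, the power `⟨z, w⟩ⁿ` reproduces `n! p(w)` on homogeneous
`p` of degree `n`. The left-hand side is therefore `(ℓ-1)! ∑ⱼ wⱼ (∂ᵢ fⱼ)(w)`, and differentiating
`∑ⱼ zⱼ fⱼ = 0` in `zᵢ` gives `fᵢ + ∑ⱼ zⱼ ∂ᵢ fⱼ = 0`.
-/

open MvPolynomial
open scoped ComplexConjugate

/-- The Fischer-Fock inner product on polynomials in `d` complex variables, determined by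
`⟨z^α, z^β⟩_F = α! δ_{α,β}`. -/
noncomputable def fock (d : ℕ) (p q : MvPolynomial (Fin d) ℂ) : ℂ :=
  ∑ α ∈ p.support ∪ q.support,
    ((∏ i, (α i).factorial : ℕ) : ℂ) * p.coeff α * conj (q.coeff α)

theorem Finsupp.prod_factorial_add_single {σ : Type*} [Fintype σ] [DecidableEq σ]
    (β : σ →₀ ℕ) (i : σ) :
    ∏ k, ((β + single i 1 : σ →₀ ℕ) k).factorial = (β i + 1) * ∏ k, (β k).factorial := by
  rw [Fintype.prod_eq_mul_prod_compl i,
    Fintype.prod_eq_mul_prod_compl i (fun k => (β k).factorial)]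
  simp only [coe_add, Pi.add_apply, single_eq_same, Nat.factorial_succ, mul_assoc]
  congr 2
  refine Finset.prod_congr rfl fun k hk => ?_
  rw [single_eq_of_ne (by simpa using hk), add_zero]

theorem MvPolynomial.pderiv_sum_X_mul {σ R : Type*} [CommSemiring R] [Fintype σ] (i : σ)
    (g : σ → MvPolynomial σ R) :
    pderiv i (∑ j, X j * g j) = g i + ∑ j, X j * pderiv i (g j) := by
  classical
  simp [Finset.sum_add_distrib, Pi.single_apply, add_comm]

noncomputable def innerPoly {d : ℕ} (w : Fin d → ℂ) : MvPolynomial (Fin d) ℂ :=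
  ∑ k, C (conj (w k)) * X k

section Fock

variable {d : ℕ}

theorem fock_eq_sum_support_left (p q : MvPolynomial (Fin d) ℂ) :
    fock d p q = ∑ α ∈ p.support,
      ((∏ i, (α i).factorial : ℕ) : ℂ) * p.coeff α * conj (q.coeff α) :=
  (Finset.sum_subset Finset.subset_union_left fun α _ hα => by
    simp [notMem_support_iff.mp hα]).symm

theorem fock_eq_sum_support_right (p q : MvPolynomial (Fin d) ℂ) :
    fock d p q = ∑ α ∈ q.support,
      ((∏ i, (α i).factorial : ℕ) : ℂ) * p.coeff α * conj (q.coeff α) :=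
  (Finset.sum_subset Finset.subset_union_right fun α _ hα => by
    simp [notMem_support_iff.mp hα]).symm

theorem fock_sum_right {ι : Type*} (p : MvPolynomial (Fin d) ℂ) (t : Finset ι)
    (q : ι → MvPolynomial (Fin d) ℂ) :
    fock d p (∑ k ∈ t, q k) = ∑ k ∈ t, fock d p (q k) := by
  simp only [fock_eq_sum_support_left p, coeff_sum, map_sum, Finset.mul_sum]
  exact Finset.sum_comm

theorem fock_C_mul_right (c : ℂ) (p q : MvPolynomial (Fin d) ℂ) :
    fock d p (C c * q) = conj c * fock d p q := by
  simp only [fock_eq_sum_support_left p, coeff_C_mul, map_mul, Finset.mul_sum]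
  exact Finset.sum_congr rfl fun _ _ => by ring

theorem fock_X_mul_right (i : Fin d) (p q : MvPolynomial (Fin d) ℂ) :
    fock d p (X i * q) = fock d (pderiv i p) q := by
  classical
  rw [fock_eq_sum_support_right, fock_eq_sum_support_right, support_X_mul, Finset.sum_map]
  refine Finset.sum_congr rfl fun β _ => ?_
  simp only [addLeftEmbedding_apply, coeff_X_mul, coeff_pderiv]
  rw [add_comm, Finsupp.prod_factorial_add_single]
  push_cast
  ring

theorem fock_one_right (p : MvPolynomial (Fin d) ℂ) : fock d p 1 = p.coeff 0 := by
  rw [fock_eq_sum_support_right]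
  simp

theorem fock_innerPoly_pow_right (w : Fin d → ℂ) {n : ℕ} {p : MvPolynomial (Fin d) ℂ}
    (hp : p.IsHomogeneous n) : fock d p (innerPoly w ^ n) = n.factorial * eval w p := by
  induction n generalizing p with
  | zero =>
    rw [← totalDegree_zero_iff_isHomogeneous, totalDegree_eq_zero_iff_eq_C] at hp
    rw [pow_zero, fock_one_right, hp, eval_C, coeff_zero_C, Nat.factorial_zero, Nat.cast_one,
      one_mul]
  | succ n ih =>
    have hexpand : innerPoly w ^ (n + 1) = ∑ k, C (conj (w k)) * (X k * innerPoly w ^ n) := by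
      rw [pow_succ', innerPoly, Finset.sum_mul]
      exact Finset.sum_congr rfl fun _ _ => mul_assoc _ _ _
    have heuler := congrArg (eval w) hp.sum_X_mul_pderiv
    simp only [map_sum, eval_mul, eval_X, nsmul_eq_mul, map_natCast] at heuler
    calc fock d p (innerPoly w ^ (n + 1))
        = ∑ k, w k * (n.factorial * eval w (pderiv k p)) := by
          rw [hexpand, fock_sum_right]
          refine Finset.sum_congr rfl fun k _ => ?_
          rw [fock_C_mul_right, fock_X_mul_right, ih hp.pderiv, Complex.conj_conj]
      _ = n.factorial * ∑ k, w k * eval w (pderiv k p) := by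
          simp only [Finset.mul_sum, mul_left_comm]
      _ = (n + 1).factorial * eval w p := by
          rw [heuler, Nat.factorial_succ]
          push_cast
          ring

end Fock

/-- If `f = (f₁,…,f_d)` are homogeneous of degree `ℓ = m + 1 ≥ 1` with
`Σᵢ zᵢ fᵢ = 0`, then for every `w ∈ ℂ^d` and index `i`,
`⟨f, ⟨z,w⟩^{ℓ-1} w̄ zᵀ eᵢ⟩_{F_ℓ} = -(ℓ-1)! fᵢ(w)`. -/
theorem stmt8 (d m : ℕ) (f : Fin d → MvPolynomial (Fin d) ℂ)
    (hf : ∀ j, (f j).IsHomogeneous (m + 1))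
    (hrel : (∑ j, X j * f j) = 0) (w : Fin d → ℂ) (i : Fin d) :
    (∑ j, fock d (f j)
        ((C (conj (w j)) * X i) * (∑ k, C (conj (w k)) * X k) ^ m))
      = -((m.factorial : ℂ)) * eval w (f i) := by
  have hdiff := congrArg (eval w) (pderiv_sum_X_mul i f)
  simp only [hrel, map_zero, map_add, map_sum, eval_mul, eval_X] at hdiff
  calc (∑ j, fock d (f j) ((C (conj (w j)) * X i) * innerPoly w ^ m))
      = ∑ j, w j * (m.factorial * eval w (pderiv i (f j))) := by
        refine Finset.sum_congr rfl fun j _ => ?_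
        rw [mul_assoc, fock_C_mul_right, fock_X_mul_right,
          fock_innerPoly_pow_right w (n := m) (hf j).pderiv, Complex.conj_conj]
    _ = m.factorial * ∑ j, w j * eval w (pderiv i (f j)) := by
        simp only [Finset.mul_sum, mul_left_comm]
    _ = -(m.factorial : ℂ) * eval w (f i) := by
        linear_combination -(m.factorial : ℂ) * hdiff
end

section
/- Let K : Ω × Ω → M_n(ℂ) be a positive semi-definite kernel and c : G → U(n) an irreducible unitary representation of a group G acting on Ω. Suppose K is quasi-invariant with multiplier c, i.e., K(z,w) = c(k) K(k⁻¹·z, k⁻¹·w) c(k)* for all k ∈ G, and K is also invariant, i.e., K(k·z, k·w) = K(z,w) for all k. Then there exists a scalar-valued positive semi-definite kernel κ on Ω × Ω, invariant under G, such that K(z,w) = κ(z,w)·I_n. -/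
open Matrix
open scoped ComplexOrder ComplexConjugate

lemma schur_aux {G : Type*} [Group G] (n : ℕ) (hn : 0 < n)
    (c : G →* Matrix.unitaryGroup (Fin n) ℂ)
    (hirr : ∀ W : Submodule ℂ (Fin n → ℂ),
      (∀ g : G, ∀ x ∈ W, (c g : Matrix (Fin n) (Fin n) ℂ).mulVec x ∈ W) → W = ⊥ ∨ W = ⊤)
    (A : Matrix (Fin n) (Fin n) ℂ)
    (hcomm : ∀ g : G, (c g : Matrix (Fin n) (Fin n) ℂ) * A = A * (c g : Matrix (Fin n) (Fin n) ℂ)) :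
    ∃ μ : ℂ, A = μ • (1 : Matrix (Fin n) (Fin n) ℂ) := by
  haveI : Nonempty (Fin n) := Fin.pos_iff_nonempty.mp hn
  set f : Module.End ℂ (Fin n → ℂ) := Matrix.mulVecLin A with hf
  obtain ⟨μ, hμ⟩ := Module.End.exists_eigenvalue f
  refine ⟨μ, ?_⟩
  have hstab : ∀ g : G, ∀ x ∈ Module.End.eigenspace f μ,
      (c g : Matrix (Fin n) (Fin n) ℂ).mulVec x ∈ Module.End.eigenspace f μ := by
    intro g x hx
    rw [Module.End.mem_eigenspace_iff] at hx ⊢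
    show A.mulVec _ = _
    have hx' : A.mulVec x = μ • x := hx
    rw [Matrix.mulVec_mulVec, ← hcomm g, ← Matrix.mulVec_mulVec, hx', Matrix.mulVec_smul]
  have hW : Module.End.eigenspace f μ = ⊤ := by
    rcases hirr _ hstab with h | h
    · exact absurd h hμ
    · exact h
  ext i j
  have hmem : (Pi.single j 1 : Fin n → ℂ) ∈ Module.End.eigenspace f μ := by
    rw [hW]; trivial
  rw [Module.End.mem_eigenspace_iff] at hmem
  have h2 : A.mulVec (Pi.single j 1 : Fin n → ℂ) = μ • (Pi.single j 1 : Fin n → ℂ) := hmem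
  have := congrFun h2 i
  simpa [Matrix.mulVec_single, Matrix.one_apply, Pi.single_apply, mul_comm] using this

/-- A positive semi-definite matrix-valued kernel which is quasi-invariant with
an irreducible unitary multiplier `c` and also invariant must be of the form `κ(z,w) I_n` for
a scalar-valued invariant positive semi-definite kernel `κ`. -/
theorem stmt12 {G Ω : Type*} [Group G] [MulAction G Ω] (n : ℕ)
    (K : Ω → Ω → Matrix (Fin n) (Fin n) ℂ)
    (hpsd : ∀ (m : ℕ) (z : Fin m → Ω) (x : Fin m → (Fin n → ℂ)),
      0 ≤ ∑ i, ∑ j, star (x i) ⬝ᵥ (K (z i) (z j)).mulVec (x j))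
    (c : G →* Matrix.unitaryGroup (Fin n) ℂ)
    (hirr : ∀ W : Submodule ℂ (Fin n → ℂ),
      (∀ g : G, ∀ x ∈ W, (c g : Matrix (Fin n) (Fin n) ℂ).mulVec x ∈ W) → W = ⊥ ∨ W = ⊤)
    (hquasi : ∀ (k : G) (z w : Ω),
      K z w = (c k : Matrix (Fin n) (Fin n) ℂ) * K (k⁻¹ • z) (k⁻¹ • w) *
        star (c k : Matrix (Fin n) (Fin n) ℂ))
    (hinv : ∀ (k : G) (z w : Ω), K (k • z) (k • w) = K z w) :
    ∃ κ : Ω → Ω → ℂ,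
      (∀ (k : G) (z w : Ω), κ (k • z) (k • w) = κ z w) ∧
      (∀ (m : ℕ) (z : Fin m → Ω) (x : Fin m → ℂ),
        0 ≤ ∑ i, ∑ j, conj (x i) * κ (z i) (z j) * x j) ∧
      ∀ z w : Ω, K z w = κ z w • (1 : Matrix (Fin n) (Fin n) ℂ) := by
  rcases Nat.eq_zero_or_pos n with hn | hn
  · subst hn
    refine ⟨0, by simp, by simp, fun z w => Subsingleton.elim _ _⟩
  -- combine quasi-invariance and invariance: K z w commutes with every c k
  have hcomm : ∀ (k : G) (z w : Ω),
      (c k : Matrix (Fin n) (Fin n) ℂ) * K z w = K z w * (c k : Matrix (Fin n) (Fin n) ℂ) := by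
    intro k z w
    have h1 : K z w = (c k : Matrix (Fin n) (Fin n) ℂ) * K z w *
        star (c k : Matrix (Fin n) (Fin n) ℂ) := by
      have := hquasi k z w
      rwa [show K (k⁻¹ • z) (k⁻¹ • w) = K z w by
        conv_lhs => rw [← hinv k (k⁻¹ • z) (k⁻¹ • w)]
        rw [smul_inv_smul, smul_inv_smul]] at this
    have hu : star (c k : Matrix (Fin n) (Fin n) ℂ) * (c k : Matrix (Fin n) (Fin n) ℂ) = 1 :=
      (c k).prop.1
    calc (c k : Matrix (Fin n) (Fin n) ℂ) * K z w
        = (c k : Matrix (Fin n) (Fin n) ℂ) * K z w *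
            (star (c k : Matrix (Fin n) (Fin n) ℂ) * (c k : Matrix (Fin n) (Fin n) ℂ)) := by
          rw [hu, mul_one]
      _ = ((c k : Matrix (Fin n) (Fin n) ℂ) * K z w * star (c k : Matrix (Fin n) (Fin n) ℂ)) *
            (c k : Matrix (Fin n) (Fin n) ℂ) := by simp only [mul_assoc]
      _ = K z w * (c k : Matrix (Fin n) (Fin n) ℂ) := by rw [← h1]
  have hscalar : ∀ z w : Ω, ∃ μ : ℂ, K z w = μ • (1 : Matrix (Fin n) (Fin n) ℂ) :=
    fun z w => schur_aux n hn c hirr (K z w) (fun g => hcomm g z w)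
  set i0 : Fin n := ⟨0, hn⟩
  refine ⟨fun z w => K z w i0 i0, ?_, ?_, ?_⟩
  · intro k z w
    show K (k • z) (k • w) i0 i0 = K z w i0 i0
    rw [hinv]
  · intro m z x
    have := hpsd m z (fun i => Pi.single i0 (x i))
    refine le_of_le_of_eq this (Finset.sum_congr rfl fun i _ => Finset.sum_congr rfl fun j _ => ?_)
    rw [← Pi.single_star, Matrix.mulVec_single, single_dotProduct]
    show star (x i) * (K (z i) (z j) i0 i0 * x j) = _
    rw [RCLike.star_def]
    ring
  · intro z w
    obtain ⟨μ, hμ⟩ := hscalar z w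
    have h0 : K z w i0 i0 = μ := by rw [hμ]; simp
    show K z w = K z w i0 i0 • 1
    rw [h0, hμ]
end

section
/- Let d ≥ 2 and let w₁ ≥ w₂ ≥ ⋯ ≥ w_d = 0 be integers with Weyl dimension ∏_{1 ≤ j < k ≤ d} (w_j − w_k + k − j)/(k − j) = d. Then either (w₁,…,w_d) = (1,0,…,0) or (w₁,…,w_d) = (1,1,…,1,0). -/
/-!
Let `m` be the number of positive entries of `w` and `v = (1^m, 0^(d-m))` (the highest weight of
`Λ^m ℂ^d`). Every gap `w j - w k` dominates the gap `v j - v k`, and each factor of the Weyl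
product is strictly increasing in its gap, so `weylDim w ≥ weylDim v = C(d, m)`, with equality
only if `w = v`. Since `C(d, m) ≥ d` for `0 < m < d`, with equality only for `m = 1` and
`m = d - 1`, the hypothesis `weylDim w = d` forces `w = (1, 0, …, 0)` or `w = (1, …, 1, 0)`.
-/

def weylDim (d : ℕ) (w : Fin d → ℤ) : ℚ :=
  ∏ j : Fin d, ∏ k : Fin d,
    if j < k then
      ((w j - w k + (k.val : ℤ) - (j.val : ℤ) : ℤ) : ℚ) / (((k.val : ℤ) - (j.val : ℤ) : ℤ) : ℚ)
    else 1

open Finset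

theorem Finset.prod_Ico_div₀ {G₀ : Type*} [CommGroupWithZero G₀] (f : ℕ → G₀)
    {a b : ℕ} (hab : a ≤ b) (hf : ∀ i, a ≤ i → i ≤ b → f i ≠ 0) :
    ∏ i ∈ Ico a b, f (i + 1) / f i = f b / f a := by
  induction b, hab using Nat.le_induction with
  | base => simp [div_self (hf a le_rfl le_rfl)]
  | succ b hab ih =>
    rw [prod_Ico_succ_top hab, ih fun i hai hib => hf i hai (by omega),
      div_mul_div_cancel₀' (hf b hab (by omega))]

theorem Nat.cast_descFactorial_eq_prod_range {K : Type*} [CommRing K] {n k : ℕ} (hk : k ≤ n) :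
    (n.descFactorial k : K) = ∏ i ∈ range k, ((n : K) - i) := by
  rw [Nat.descFactorial_eq_prod_range, Nat.cast_prod]
  exact prod_congr rfl fun i hi => Nat.cast_sub (by simp at hi; omega)

theorem Nat.cast_choose_eq_prod_range_div {K : Type*} [Field K] [CharZero K] {n k : ℕ}
    (hk : k ≤ n) : (n.choose k : K) = ∏ i ∈ range k, ((n : K) - i) / ((k : K) - i) := by
  rw [prod_div_distrib, ← Nat.cast_descFactorial_eq_prod_range hk,
    ← Nat.cast_descFactorial_eq_prod_range le_rfl, Nat.descFactorial_self,
    Nat.descFactorial_eq_factorial_mul_choose, Nat.cast_mul,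
    mul_div_cancel_left₀ _ (Nat.cast_ne_zero.2 k.factorial_ne_zero)]

theorem Nat.self_le_choose : ∀ {n k : ℕ}, 1 ≤ k → k < n → n ≤ n.choose k
  | n + 1, 1, _, _ => by simp
  | n + 1, k + 2, _, hk => by
    have := Nat.self_le_choose (n := n) (k := k + 1) (by omega) (by omega)
    have := Nat.choose_pos (n := n) (k := k + 1 + 1) (by omega)
    rw [Nat.choose_succ_succ']
    omega

theorem Nat.self_lt_choose {n k : ℕ} (hk : 2 ≤ k) (hkn : k + 2 ≤ n) : n < n.choose k := by
  obtain ⟨n, rfl⟩ : ∃ n', n = n' + 1 := ⟨n - 1, by omega⟩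
  obtain ⟨k, rfl⟩ : ∃ k', k = k' + 1 := ⟨k - 1, by omega⟩
  have := Nat.self_le_choose (n := n) (k := k) (by omega) (by omega)
  have := Nat.self_le_choose (n := n) (k := k + 1) (by omega) (by omega)
  rw [Nat.choose_succ_succ']
  omega

theorem Nat.choose_eq_self_iff {n k : ℕ} (hk : k < n) :
    n.choose k = n ↔ k = 1 ∨ k = n - 1 := by
  refine ⟨fun h => ?_, ?_⟩
  · rcases Nat.lt_or_ge k 2 with hk2 | hk2
    · obtain rfl | rfl : k = 0 ∨ k = 1 := by omega
      · rw [Nat.choose_zero_right] at h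
        omega
      · exact Or.inl rfl
    · by_contra hne
      have := Nat.self_lt_choose (n := n) hk2 (by omega)
      omega
  · rintro (rfl | rfl)
    · exact Nat.choose_one_right n
    · rw [Nat.choose_symm (by omega), Nat.choose_one_right]

theorem Fin.val_lt_card_filter_iff {d : ℕ} {p : Fin d → Prop} [DecidablePred p]
    (hp : Antitone p) (j : Fin d) : (j : ℕ) < #{i | p i} ↔ p j := by
  constructor
  · intro hj
    by_contra hpj
    have hsub : ({i | p i} : Finset (Fin d)) ⊆ Iio j := fun i hi => by
      simp only [mem_filter, mem_univ, true_and] at hi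
      exact mem_Iio.2 (lt_of_not_ge fun hji => hpj (hp hji hi))
    have := card_le_card hsub
    rw [Fin.card_Iio] at this
    omega
  · intro hpj
    have hsub : Iic j ⊆ ({i | p i} : Finset (Fin d)) := fun i hi =>
      mem_filter.2 ⟨mem_univ i, hp (mem_Iic.1 hi) hpj⟩
    have := card_le_card hsub
    rw [Fin.card_Iic] at this
    omega

theorem weylDim_eq_prod_range (d : ℕ) (u : ℕ → ℤ) :
    weylDim d (fun j => u j) = ∏ j ∈ range d, ∏ k ∈ range d,
      if j < k then ((u j - u k + k - j : ℤ) : ℚ) / ((k - j : ℤ) : ℚ) else 1 := by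
  rw [weylDim, ← Fin.prod_univ_eq_prod_range]
  refine prod_congr rfl fun j _ => ?_
  rw [← Fin.prod_univ_eq_prod_range]
  refine prod_congr rfl fun k _ => ?_
  simp only [Fin.lt_def]

theorem weylDim_indicator {d m : ℕ} (hm : m ≤ d) :
    weylDim d (fun j => if (j : ℕ) < m then 1 else 0) = d.choose m := by
  have hfac : ∀ j k : ℕ,
      (if j < k then (((if j < m then 1 else 0) - (if k < m then 1 else 0) + k - j : ℤ) : ℚ) /
        ((k - j : ℤ) : ℚ) else 1) =
      if j < m ∧ m ≤ k then ((k : ℚ) + 1 - j) / ((k : ℚ) - j) else 1 := by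
    intro j k
    by_cases hjk : j < k
    · have hkj : (k : ℚ) - j ≠ 0 := sub_ne_zero.2 (by exact_mod_cast hjk.ne')
      rw [if_pos hjk]
      push_cast
      split_ifs <;> first | omega | (field_simp; ring)
    · rw [if_neg hjk, if_neg (by omega)]
  have hrow : ∀ j < m, ∏ k ∈ Ico m d, ((k : ℚ) + 1 - j) / ((k : ℚ) - j) =
      ((d : ℚ) - j) / ((m : ℚ) - j) := by
    intro j hj
    have := prod_Ico_div₀ (fun k : ℕ => (k : ℚ) - j) hm fun i hi _ =>
      sub_ne_zero.2 (by exact_mod_cast (show j < i by omega).ne')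
    simpa [add_sub_right_comm] using this
  rw [weylDim_eq_prod_range d (fun i => if i < m then 1 else 0)]
  simp_rw [hfac]
  rw [← prod_range_mul_prod_Ico _ hm, Nat.cast_choose_eq_prod_range_div hm,
    prod_eq_one (s := Ico m d) fun j hj => prod_eq_one fun k _ => if_neg (by simp at hj; omega),
    mul_one]
  refine prod_congr rfl fun j hj => ?_
  rw [mem_range] at hj
  rw [← prod_range_mul_prod_Ico _ hm,
    prod_eq_one (s := range m) fun k hk => if_neg (by simp at hk; omega), one_mul, ← hrow j hj]
  exact prod_congr rfl fun k hk => if_pos ⟨hj, (mem_Ico.1 hk).1⟩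

theorem weylDim_lt_weylDim {d : ℕ} {v w : Fin d → ℤ} (hv : Antitone v)
    (hle : ∀ j k, j < k → v j - v k ≤ w j - w k)
    (hlt : ∃ j k, j < k ∧ v j - v k < w j - w k) : weylDim d v < weylDim d w := by
  have hden : ∀ j k : Fin d, j < k → (0 : ℚ) < ((k.val - j.val : ℤ) : ℚ) := fun j k h =>
    Int.cast_pos.2 (by omega)
  simp only [weylDim, ← Fintype.prod_prod_type']
  obtain ⟨j₀, k₀, hjk₀, hlt₀⟩ := hlt
  refine prod_lt_prod (fun p _ => ?_) (fun p _ => ?_) ⟨(j₀, k₀), mem_univ _, ?_⟩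
  · split_ifs with h
    · exact div_pos (Int.cast_pos.2 (by have := hv h.le; omega)) (hden _ _ h)
    · exact one_pos
  · split_ifs with h
    · exact div_le_div_of_nonneg_right (Int.cast_le.2 (by have := hle _ _ h; omega))
        (hden _ _ h).le
    · exact le_rfl
  · simp only [if_pos hjk₀]
    exact div_lt_div_of_pos_right (Int.cast_lt.2 (by omega)) (hden _ _ hjk₀)

theorem self_lt_weylDim {d m : ℕ} {w : Fin d → ℤ} (hw : Antitone w)
    (hnonneg : ∀ j, 0 ≤ w j) (hm : ∀ j : Fin d, (j : ℕ) < m ↔ 0 < w j) (hmd : m < d)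
    (hne : w ≠ fun j : Fin d => if (j : ℕ) < m then (1 : ℤ) else 0) :
    (d : ℚ) < weylDim d w := by
  obtain ⟨i, hi⟩ := Function.ne_iff.1 hne
  have him : (i : ℕ) < m := by
    by_contra h
    have := (hm i).not.1 h
    have := hnonneg i
    simp only [h, if_false] at hi
    omega
  have hwm : w ⟨m, hmd⟩ = 0 := by
    have := (hm ⟨m, hmd⟩).not.1 (lt_irrefl m)
    have := hnonneg ⟨m, hmd⟩
    omega
  calc (d : ℚ) ≤ d.choose m := by exact_mod_cast Nat.self_le_choose (by omega) hmd
    _ = weylDim d (fun j => if (j : ℕ) < m then 1 else 0) := (weylDim_indicator hmd.le).symm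
    _ < weylDim d w := by
      -- the gap between `i` and `m` is `w i ≥ 2` for `w`, but `1` for the indicator
      refine weylDim_lt_weylDim (fun j k hjk => ?_) (fun j k hjk => ?_)
        ⟨i, ⟨m, hmd⟩, him, ?_⟩
      · split_ifs <;> omega
      · have := hw hjk.le
        have := hm j
        have := hm k
        have := hnonneg k
        split_ifs <;> omega
      · have := (hm i).1 him
        simp only [him, if_true, lt_irrefl, if_false] at hi ⊢
        omega

/-- If `w₁ ≥ ⋯ ≥ w_d = 0` are integers (`d = n + 2 ≥ 2`) whose Weyl dimension
equals `d`, then `w = (1,0,…,0)` or `w = (1,…,1,0)`. -/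
theorem stmt15 (n : ℕ) (w : Fin (n + 2) → ℤ) (hmono : Antitone w)
    (hlast : w (Fin.last (n + 1)) = 0)
    (hdim : weylDim (n + 2) w = ((n : ℚ) + 2)) :
    (∀ j, w j = if j = 0 then 1 else 0) ∨
    (∀ j, w j = if j = Fin.last (n + 1) then 0 else 1) := by
  have hnonneg : ∀ j, 0 ≤ w j := fun j => hlast ▸ hmono (Fin.le_last j)
  obtain ⟨m, hm⟩ : ∃ m, ∀ j : Fin (n + 2), (j : ℕ) < m ↔ 0 < w j :=
    ⟨_, Fin.val_lt_card_filter_iff fun i j hij h => h.trans_le (hmono hij)⟩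
  have hmd : m < n + 2 := by
    have := (hm (Fin.last (n + 1))).not.2 (by omega)
    simp only [Fin.val_last] at this
    omega
  by_cases hw : w = fun j : Fin (n + 2) => if (j : ℕ) < m then (1 : ℤ) else 0
  · have hchoose : (n + 2).choose m = n + 2 := by
      rw [hw, weylDim_indicator hmd.le] at hdim
      exact_mod_cast hdim
    obtain rfl | rfl := (Nat.choose_eq_self_iff hmd).1 hchoose
    · exact Or.inl fun j => by simp only [hw, Nat.lt_one_iff, Fin.ext_iff, Fin.val_zero]
    · exact Or.inr fun j => by
        by_cases hj : j = Fin.last (n + 1)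
        · simp [hw, hj]
        · simp only [hw, if_neg hj, if_pos (show (j : ℕ) < n + 2 - 1 from Fin.val_lt_last hj)]
  · have := self_lt_weylDim hmono hnonneg hm hmd hw
    push_cast at this
    exact absurd hdim this.ne'
end

section
/- Let d ≥ 3 and let w₁ ≥ w₂ ≥ ⋯ ≥ w_d = 0 be integers. Then the product ∏_{1 ≤ j < k ≤ d} (w_j − w_k + k − j)/(k − j) never takes a value n with 2 ≤ n ≤ d − 1. -/
lemma prodA (m : ℕ) : ∏ i ∈ Finset.range m, (((i:ℚ)+2)/((i:ℚ)+1)) = (m:ℚ)+1 := by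
  induction m with
  | zero => simp
  | succ m ih =>
    rw [Finset.prod_range_succ, ih]
    have h : ((m:ℚ)+1) ≠ 0 := by positivity
    push_cast
    field_simp
    ring

lemma prodB (m : ℕ) : ∏ i ∈ Finset.range m, (((i:ℚ)+3)/((i:ℚ)+2)) = ((m:ℚ)+2)/2 := by
  induction m with
  | zero => norm_num
  | succ m ih =>
    rw [Finset.prod_range_succ, ih]
    have h : ((m:ℚ)+2) ≠ 0 := by positivity
    push_cast
    field_simp
    ring

/-- Lower-bound comparison function: picks out column `k = t` and row `j = t-1`. -/
def gAux (d t : ℕ) (j k : Fin d) : ℚ :=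
  (if j.val < t ∧ k.val = t then ((t + 1 - j.val : ℕ) : ℚ)/((t - j.val : ℕ) : ℚ) else 1) *
  (if j.val = t - 1 ∧ t < k.val then ((k.val - t + 2 : ℕ):ℚ)/((k.val - t + 1:ℕ):ℚ) else 1)

lemma gAux_nonneg (d t : ℕ) (j k : Fin d) : 0 ≤ gAux d t j k := by
  unfold gAux
  apply mul_nonneg <;> split <;> positivity

lemma prod_gAux (d t : ℕ) (ht1 : 1 ≤ t) (ht2 : t + 1 ≤ d) :
    (∏ j : Fin d, ∏ k : Fin d, gAux d t j k)
      = ((t:ℚ)+1) * ((((d - t - 1 : ℕ)):ℚ)+2)/2 := by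
  unfold gAux
  rw [Finset.prod_congr rfl (fun j _ => Finset.prod_mul_distrib)]
  rw [Finset.prod_mul_distrib]
  have tF : Fin d := ⟨t, by omega⟩
  -- first factor
  have h1 : (∏ j : Fin d, ∏ k : Fin d,
      (if j.val < t ∧ k.val = t then ((t + 1 - j.val : ℕ) : ℚ)/((t - j.val : ℕ) : ℚ) else 1))
      = (t:ℚ)+1 := by
    have hinner : ∀ j : Fin d, (∏ k : Fin d,
        (if j.val < t ∧ k.val = t then ((t + 1 - j.val : ℕ) : ℚ)/((t - j.val : ℕ) : ℚ) else 1))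
        = (if j.val < t then ((t + 1 - j.val : ℕ) : ℚ)/((t - j.val : ℕ) : ℚ) else 1) := by
      intro j
      by_cases hj : j.val < t
      · simp only [hj, true_and, if_pos]
        have hcond : ∀ k : Fin d, (k.val = t) = (k = (⟨t, by omega⟩ : Fin d)) := by
          intro k; simp [Fin.ext_iff]
        simp only [hcond]
        rw [Finset.prod_ite_eq' Finset.univ (⟨t, by omega⟩ : Fin d)
          (fun _ => ((t + 1 - j.val : ℕ) : ℚ)/((t - j.val : ℕ) : ℚ))]
        simp
      · simp [hj]
    rw [Finset.prod_congr rfl (fun j _ => hinner j)]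
    rw [Fin.prod_univ_eq_prod_range
      (fun i => if i < t then ((t + 1 - i : ℕ) : ℚ)/((t - i : ℕ) : ℚ) else 1) d]
    rw [Finset.range_eq_Ico, ← Finset.prod_Ico_consecutive _ (Nat.zero_le t) (by omega : t ≤ d)]
    have h2 : (∏ i ∈ Finset.Ico t d,
        (if i < t then ((t + 1 - i : ℕ) : ℚ)/((t - i : ℕ) : ℚ) else 1)) = 1 := by
      apply Finset.prod_eq_one
      intro i hi
      rw [Finset.mem_Ico] at hi
      simp [Nat.not_lt.mpr hi.1]
    rw [h2, mul_one, ← Finset.range_eq_Ico]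
    have h3 : (∏ i ∈ Finset.range t,
        (if i < t then ((t + 1 - i : ℕ) : ℚ)/((t - i : ℕ) : ℚ) else 1))
        = ∏ i ∈ Finset.range t, (((t - 1 - i) + 2 : ℕ) : ℚ)/(((t - 1 - i) + 1 : ℕ) : ℚ) := by
      apply Finset.prod_congr rfl
      intro i hi
      rw [Finset.mem_range] at hi
      rw [if_pos hi]
      congr 2 <;> omega
    rw [h3, Finset.prod_range_reflect (fun i => (((i) + 2 : ℕ) : ℚ)/(((i) + 1 : ℕ) : ℚ)) t]
    rw [← prodA t]
    apply Finset.prod_congr rfl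
    intro i _
    push_cast
    ring
  -- second factor
  have h4 : (∏ j : Fin d, ∏ k : Fin d,
      (if j.val = t - 1 ∧ t < k.val then ((k.val - t + 2 : ℕ):ℚ)/((k.val - t + 1:ℕ):ℚ) else 1))
      = (((d - t - 1 : ℕ)):ℚ)/2 + 1 := by
    have hinner : ∀ j : Fin d, (∏ k : Fin d,
        (if j.val = t - 1 ∧ t < k.val then ((k.val - t + 2 : ℕ):ℚ)/((k.val - t + 1:ℕ):ℚ) else 1))
        = (if j = (⟨t - 1, by omega⟩ : Fin d) then
            (∏ k : Fin d, (if t < k.val then ((k.val - t + 2 : ℕ):ℚ)/((k.val - t + 1:ℕ):ℚ) else 1))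
          else 1) := by
      intro j
      by_cases hj : j = (⟨t - 1, by omega⟩ : Fin d)
      · have hjv : j.val = t - 1 := by rw [hj]
        simp only [hjv, true_and, hj, if_pos]
      · have hjv : ¬ (j.val = t - 1) := by
          intro h; exact hj (Fin.ext h)
        simp [hjv, hj]
    rw [Finset.prod_congr rfl (fun j _ => hinner j)]
    rw [Finset.prod_ite_eq' Finset.univ (⟨t - 1, by omega⟩ : Fin d)
      (fun _ => (∏ k : Fin d, (if t < k.val then ((k.val - t + 2 : ℕ):ℚ)/((k.val - t + 1:ℕ):ℚ) else 1)))]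
    simp only [Finset.mem_univ, if_pos]
    rw [Fin.prod_univ_eq_prod_range
      (fun i => if t < i then ((i - t + 2 : ℕ):ℚ)/((i - t + 1:ℕ):ℚ) else 1) d]
    rw [Finset.range_eq_Ico, ← Finset.prod_Ico_consecutive _ (Nat.zero_le (t+1)) (by omega : t + 1 ≤ d)]
    have h5 : (∏ i ∈ Finset.Ico 0 (t+1),
        (if t < i then ((i - t + 2 : ℕ):ℚ)/((i - t + 1:ℕ):ℚ) else 1)) = 1 := by
      apply Finset.prod_eq_one
      intro i hi
      rw [Finset.mem_Ico] at hi
      have : ¬ t < i := by omega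
      simp [this]
    rw [h5, one_mul, Finset.prod_Ico_eq_prod_range]
    have h6 : (∏ i ∈ Finset.range (d - (t+1)),
        (if t < t + 1 + i then ((t + 1 + i - t + 2 : ℕ):ℚ)/((t + 1 + i - t + 1:ℕ):ℚ) else 1))
        = ∏ i ∈ Finset.range (d - (t+1)), (((i:ℚ)+3)/((i:ℚ)+2)) := by
      apply Finset.prod_congr rfl
      intro i _
      rw [if_pos (by omega)]
      have e1 : t + 1 + i - t + 2 = i + 3 := by omega
      have e2 : t + 1 + i - t + 1 = i + 2 := by omega
      rw [e1, e2]
      push_cast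
      ring
    rw [h6, prodB]
    have : d - (t+1) = d - t - 1 := by omega
    rw [this]
    ring
  rw [h1, h4]
  ring

/-- For `d = n + 3 ≥ 3` and integers `w₁ ≥ ⋯ ≥ w_d = 0`, the Weyl dimension
never takes a value `m` with `2 ≤ m ≤ d - 1`. -/
theorem stmt16 (n : ℕ) (w : Fin (n + 3) → ℤ) (hmono : Antitone w)
    (hlast : w (Fin.last (n + 2)) = 0) :
    ∀ m : ℕ, 2 ≤ m → m ≤ n + 2 → weylDim (n + 3) w ≠ (m : ℚ) := by
  intro m hm2 hm hEq
  have hnonneg : ∀ j, (0:ℤ) ≤ w j := fun j => hlast ▸ hmono (Fin.le_last j)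
  by_cases h0 : w 0 = 0
  · -- all weights zero : weylDim = 1
    have hall : ∀ j, w j = 0 := fun j =>
      le_antisymm (h0 ▸ hmono (Fin.zero_le j)) (hnonneg j)
    have h1 : weylDim (n+3) w = 1 := by
      unfold weylDim
      apply Finset.prod_eq_one
      intro j _
      apply Finset.prod_eq_one
      intro k _
      split
      · rename_i hjk
        have hv : j.val < k.val := hjk
        rw [hall j, hall k]
        rw [show (0:ℤ) - 0 + (k.val:ℤ) - (j.val:ℤ) = (k.val:ℤ) - (j.val:ℤ) by ring]
        apply div_self
        simp only [ne_eq, Int.cast_eq_zero]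
        omega
      · rfl
    rw [h1] at hEq
    have hm1 : m = 1 := by exact_mod_cast hEq.symm
    omega
  · -- nontrivial weight
    set s : Finset (Fin (n+3)) := Finset.univ.filter (fun j => w j = 0) with hs
    have hsne : s.Nonempty := ⟨Fin.last (n+2), by simp [hs, hlast]⟩
    set tF := s.min' hsne with htFdef
    have htF0 : w tF = 0 := by
      have := Finset.min'_mem s hsne
      simpa [hs] using this
    have htFmin : ∀ j, w j = 0 → tF ≤ j := fun j hj =>
      Finset.min'_le s j (by simp [hs, hj])
    set t := tF.val with ht
    have ht1 : 1 ≤ t := by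
      by_contra h
      have h2 : tF = 0 := by
        apply Fin.ext
        simp only [Fin.val_zero]
        omega
      exact h0 (h2 ▸ htF0)
    have ht2 : t + 1 ≤ n + 3 := tF.isLt
    have hw1 : ∀ j : Fin (n+3), j.val < t → 1 ≤ w j := by
      intro j hj
      have hne : w j ≠ 0 := by
        intro h
        have := htFmin j h
        rw [Fin.le_def] at this
        omega
      have := hnonneg j
      omega
    have hwz : ∀ k : Fin (n+3), t ≤ k.val → w k = 0 := by
      intro k hk
      have h1 : w k ≤ w tF := hmono (by rw [Fin.le_def]; exact hk)
      have := hnonneg k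
      omega
    -- key pointwise comparison
    have hkey : ∀ j k : Fin (n+3), gAux (n+3) t j k ≤
        (if j < k then
          ((w j - w k + (k.val : ℤ) - (j.val : ℤ) : ℤ) : ℚ) / (((k.val : ℤ) - (j.val : ℤ) : ℤ) : ℚ)
        else 1) := by
      intro j k
      unfold gAux
      by_cases hc1 : j.val < t ∧ k.val = t
      · have hnc2 : ¬ (j.val = t - 1 ∧ t < k.val) := by omega
        rw [if_pos hc1, if_neg hnc2, mul_one]
        have hjk : j < k := by rw [Fin.lt_def]; omega
        rw [if_pos hjk]
        have hwj : 1 ≤ w j := hw1 j hc1.1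
        have hwk : w k = 0 := hwz k (by omega)
        have hwjq : (1:ℚ) ≤ (w j : ℚ) := by exact_mod_cast hwj
        have e1 : ((t + 1 - j.val : ℕ):ℚ) = (t:ℚ) + 1 - (j.val:ℚ) := by
          rw [Nat.cast_sub (by omega)]; push_cast; ring
        have e2 : ((t - j.val : ℕ):ℚ) = (t:ℚ) - (j.val:ℚ) := by
          rw [Nat.cast_sub (by omega)]
        have e3 : ((w j - w k + (k.val : ℤ) - (j.val : ℤ) : ℤ) : ℚ)
            = (w j : ℚ) + ((t:ℚ) - (j.val:ℚ)) := by
          rw [hwk, hc1.2]; push_cast; ring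
        have e4 : (((k.val : ℤ) - (j.val : ℤ) : ℤ) : ℚ) = (t:ℚ) - (j.val:ℚ) := by
          rw [hc1.2]; push_cast; ring
        rw [e1, e2, e3, e4]
        have hpos : (0:ℚ) < (t:ℚ) - (j.val:ℚ) := by
          have : (j.val:ℚ) < (t:ℚ) := by exact_mod_cast hc1.1
          linarith
        rw [div_le_div_iff_of_pos_right hpos]
        linarith
      · by_cases hc2 : j.val = t - 1 ∧ t < k.val
        · rw [if_neg hc1, if_pos hc2, one_mul]
          have hjk : j < k := by rw [Fin.lt_def]; omega
          rw [if_pos hjk]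
          have hwj : 1 ≤ w j := hw1 j (by omega)
          have hwk : w k = 0 := hwz k (by omega)
          have hwjq : (1:ℚ) ≤ (w j : ℚ) := by exact_mod_cast hwj
          have hjq : (j.val:ℚ) = (t:ℚ) - 1 := by
            rw [hc2.1, Nat.cast_sub ht1]
            push_cast
            ring
          have hkq : ((k.val - t : ℕ):ℚ) = (k.val:ℚ) - (t:ℚ) := Nat.cast_sub (by omega)
          have e1 : ((k.val - t + 2 : ℕ):ℚ) = ((k.val:ℚ) - (j.val:ℚ)) + 1 := by
            push_cast [hkq, hjq]
            ring
          have e2 : ((k.val - t + 1 : ℕ):ℚ) = (k.val:ℚ) - (j.val:ℚ) := by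
            push_cast [hkq, hjq]
            ring
          have e3 : ((w j - w k + (k.val : ℤ) - (j.val : ℤ) : ℤ) : ℚ)
              = (w j : ℚ) + ((k.val:ℚ) - (j.val:ℚ)) := by
            rw [hwk]; push_cast; ring
          have e4 : (((k.val : ℤ) - (j.val : ℤ) : ℤ) : ℚ) = (k.val:ℚ) - (j.val:ℚ) := by
            push_cast; ring
          rw [e1, e2, e3, e4]
          have hpos : (0:ℚ) < (k.val:ℚ) - (j.val:ℚ) := by
            have hv : j.val < k.val := by omega
            have : (j.val:ℚ) < (k.val:ℚ) := by exact_mod_cast hv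
            linarith
          rw [div_le_div_iff_of_pos_right hpos]
          linarith
        · rw [if_neg hc1, if_neg hc2, one_mul]
          split
          · rename_i hjk
            have hv : j.val < k.val := hjk
            have hwjk : w k ≤ w j := hmono (le_of_lt hjk)
            have hpos : (0:ℚ) < (((k.val : ℤ) - (j.val : ℤ) : ℤ) : ℚ) := by
              have : (0:ℤ) < (k.val:ℤ) - (j.val:ℤ) := by omega
              exact_mod_cast this
            rw [one_le_div hpos]
            have h1 : (k.val:ℤ) - (j.val:ℤ) ≤ w j - w k + (k.val:ℤ) - (j.val:ℤ) := by omega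
            exact_mod_cast h1
          · exact le_refl 1
    -- assemble
    have hled : (∏ j : Fin (n+3), ∏ k : Fin (n+3), gAux (n+3) t j k) ≤ weylDim (n+3) w := by
      unfold weylDim
      apply Finset.prod_le_prod
      · intro j _
        exact Finset.prod_nonneg fun k _ => gAux_nonneg _ _ j k
      · intro j _
        exact Finset.prod_le_prod (fun k _ => gAux_nonneg _ _ j k) (fun k _ => hkey j k)
    rw [prod_gAux (n+3) t ht1 ht2] at hled
    have hu : ((n + 3 - t - 1 : ℕ):ℚ) = (n:ℚ) + 2 - (t:ℚ) := by
      rw [show n + 3 - t - 1 = n + 2 - t by omega, Nat.cast_sub (by omega)]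
      push_cast; ring
    rw [hu] at hled
    have h1q : (1:ℚ) ≤ (t:ℚ) := by exact_mod_cast ht1
    have h2q : (t:ℚ) ≤ (n:ℚ) + 2 := by
      have : t ≤ n + 2 := by omega
      exact_mod_cast this
    have hbig : ((n:ℚ) + 3) ≤ ((t:ℚ)+1) * (((n:ℚ) + 2 - (t:ℚ))+2)/2 := by
      nlinarith
    have hmq : (m:ℚ) ≤ (n:ℚ) + 2 := by
      have : (m:ℚ) ≤ ((n+2 : ℕ):ℚ) := by exact_mod_cast hm
      push_cast at this
      linarith
    rw [hEq] at hled
    linarith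
end
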